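/- The trace-one operator A = (1/12)(R₀ + 2·SWAP₁₂) on (ℂ²)^⊗3 satisfies the Lieb–Mattis inequality 0 ≤ x+y+z ≤ 3 but violates the Parekh–Thompson inequality (x²+y²+z²) − 2(xy+xz+yz) + 2(x+y+z) ≤ 3, where x, y, z are its expectations on SWAP₁₂, SWAP₁₃, SWAP₂₃. -/

import Mathlib

open Matrix
open scoped ComplexOrder

/-- The permutation operator `T(π)` on `(ℂ^d)^⊗n`. -/
noncomputable def permOp (n d : ℕ) (π : Equiv.Perm (Fin n)) :
    Matrix (Fin n → Fin d) (Fin n → Fin d) ℂ :=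
  Matrix.of fun i j => if i = j ∘ ⇑π.symm then 1 else 0

/-- The swap operator exchanging tensor factors `i` and `j` of `(ℂ²)^⊗n`. -/
noncomputable def swapOp (n : ℕ) (i j : Fin n) :
    Matrix (Fin n → Fin 2) (Fin n → Fin 2) ℂ :=
  permOp n 2 (Equiv.swap i j)

/-- Projector onto the symmetric subspace of three qubits. -/
noncomputable def Rplus : Matrix (Fin 3 → Fin 2) (Fin 3 → Fin 2) ℂ :=
  (1/3 : ℂ) • (swapOp 3 0 1 + swapOp 3 0 2 + swapOp 3 1 2)

/-- Projector onto the `[2,1]` isotypic component of three qubits. -/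
noncomputable def Rzero : Matrix (Fin 3 → Fin 2) (Fin 3 → Fin 2) ℂ :=
  (1/3 : ℂ) • ((3 : ℂ) • (1 : Matrix (Fin 3 → Fin 2) (Fin 3 → Fin 2) ℂ)
    - swapOp 3 0 1 - swapOp 3 0 2 - swapOp 3 1 2)

/-!
The trace of a permutation operator counts the colourings `Fin 3 → Fin 2` it fixes, so on three
qubits the character is `8, 4, 2` on the identity, the transpositions and the 3-cycles. Hence
`Rzero` has trace `4` and is trace-orthogonal to every transposition, so all expectations of `A`
come from the `2 • SWAP₁₂` term: `x = 4/3`, `y = z = 1/3`. Then `x + y + z = 2`, while the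
Parekh–Thompson expression equals `2 - 2 + 4 = 4 > 3`.
-/

open Equiv Finset

lemma permOp_mul (n d : ℕ) (σ τ : Perm (Fin n)) :
    permOp n d σ * permOp n d τ = permOp n d (σ * τ) := by
  ext i k
  simp only [permOp, mul_apply, of_apply, mul_ite, mul_one, mul_zero,
    Finset.sum_ite_eq', Finset.mem_univ, if_true]
  congr 1

lemma trace_permOp (n d : ℕ) (σ : Perm (Fin n)) :
    (permOp n d σ).trace = #{f : Fin n → Fin d | f = f ∘ σ.symm} := by
  simp [permOp, trace, Finset.sum_boole]

lemma card_invariant_fin_three_two : ∀ σ : Perm (Fin 3),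
    #{f : Fin 3 → Fin 2 | f = f ∘ σ.symm} =
      if σ = 1 then 8 else if σ * σ = 1 then 4 else 2 := by
  decide

lemma trace_permOp_three_two (σ : Perm (Fin 3)) :
    (permOp 3 2 σ).trace = if σ = 1 then 8 else if σ * σ = 1 then 4 else 2 := by
  rw [trace_permOp, card_invariant_fin_three_two]
  split_ifs <;> norm_num

lemma swap_mul_swap_ne_one_and_mul_self_ne_one :
    ∀ i j k l : Fin 3, i ≠ j → k ≠ l → swap i j ≠ swap k l →
    swap i j * swap k l ≠ 1 ∧ swap i j * swap k l * (swap i j * swap k l) ≠ 1 := by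
  decide

lemma trace_swapOp (i j : Fin 3) (hij : i ≠ j) : (swapOp 3 i j).trace = 4 := by
  rw [swapOp, trace_permOp_three_two, if_neg (swap_eq_one_iff.not.mpr hij),
    if_pos (Equiv.swap_mul_self i j)]

lemma trace_swapOp_mul_swapOp (i j k l : Fin 3) (hij : i ≠ j) (hkl : k ≠ l) :
    (swapOp 3 i j * swapOp 3 k l).trace = if swap i j = swap k l then 8 else 2 := by
  rw [swapOp, swapOp, permOp_mul, trace_permOp_three_two]
  by_cases h : swap i j = swap k l
  · rw [h, Equiv.swap_mul_self, if_pos rfl, if_pos rfl]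
  · obtain ⟨h1, h2⟩ := swap_mul_swap_ne_one_and_mul_self_ne_one i j k l hij hkl h
    rw [if_neg h1, if_neg h2, if_neg h]

lemma trace_Rzero : Rzero.trace = 4 := by
  simp only [Rzero, trace_smul, trace_sub, trace_one, Fintype.card_fun, Fintype.card_fin,
    trace_swapOp _ _ (by decide : (0 : Fin 3) ≠ 1),
    trace_swapOp _ _ (by decide : (0 : Fin 3) ≠ 2),
    trace_swapOp _ _ (by decide : (1 : Fin 3) ≠ 2)]
  norm_num

-- The character of the `[2,1]` irrep of `S₃` vanishes on transpositions.
lemma trace_Rzero_mul_swapOp (i j : Fin 3) (hij : i ≠ j) : (Rzero * swapOp 3 i j).trace = 0 := by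
  simp only [Rzero, Matrix.smul_mul, Matrix.sub_mul, Matrix.one_mul, trace_smul, trace_sub,
    trace_swapOp i j hij, trace_swapOp_mul_swapOp _ _ _ _ (by decide : (0 : Fin 3) ≠ 1) hij,
    trace_swapOp_mul_swapOp _ _ _ _ (by decide : (0 : Fin 3) ≠ 2) hij,
    trace_swapOp_mul_swapOp _ _ _ _ (by decide : (1 : Fin 3) ≠ 2) hij]
  fin_cases i <;> fin_cases j <;> simp +decide at hij ⊢ <;> norm_num

lemma trace_smul_Rzero_add_swapOp_mul_swapOp (i j : Fin 3) (hij : i ≠ j) :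
    ((1/12 : ℂ) • (Rzero + (2 : ℂ) • swapOp 3 0 1) * swapOp 3 i j).trace =
      if swap 0 1 = swap i j then 4/3 else 1/3 := by
  rw [Matrix.smul_mul, Matrix.add_mul, Matrix.smul_mul, trace_smul, trace_add, trace_smul,
    trace_Rzero_mul_swapOp i j hij, trace_swapOp_mul_swapOp 0 1 i j (by decide) hij]
  split_ifs <;> norm_num

theorem lm_not_pt :
    ∀ A : Matrix (Fin 3 → Fin 2) (Fin 3 → Fin 2) ℂ,
      A = (1/12 : ℂ) • (Rzero + (2 : ℂ) • swapOp 3 0 1) →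
      A.trace = 1 ∧
      ∀ x y z : ℝ,
        x = (Matrix.trace (A * swapOp 3 0 1)).re →
        y = (Matrix.trace (A * swapOp 3 0 2)).re →
        z = (Matrix.trace (A * swapOp 3 1 2)).re →
        (0 ≤ x + y + z ∧ x + y + z ≤ 3) ∧
        ¬ ((x ^ 2 + y ^ 2 + z ^ 2) - 2 * (x * y + x * z + y * z)
            + 2 * (x + y + z) ≤ 3) := by
  rintro A rfl
  refine ⟨?_, fun x y z hx hy hz => ?_⟩
  · rw [trace_smul, trace_add, trace_smul, trace_Rzero, trace_swapOp 0 1 (by decide)]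
    norm_num
  rw [trace_smul_Rzero_add_swapOp_mul_swapOp 0 1 (by decide), if_pos rfl] at hx
  rw [trace_smul_Rzero_add_swapOp_mul_swapOp 0 2 (by decide), if_neg (by decide)] at hy
  rw [trace_smul_Rzero_add_swapOp_mul_swapOp 1 2 (by decide), if_neg (by decide)] at hz
  norm_num at hx hy hz
  subst hx hy hz
  norm_num
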